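/- arXiv:2408.05325 — 4 statements merged into one kernel-verified Lean document; each statement's English description precedes it below -/
import Mathlib

section
/- Let A and B be (possibly non-unital) associative R-algebras and let F, G : A → B be algebra homomorphisms admitting a common section, i.e. an algebra homomorphism r : B → A with F ∘ r = G ∘ r = id_B. Then the image of the R-linear map F − G : A → B is a two-sided ideal of B. -/
/-- Let `A`, `B` be (possibly non-unital) associative `R`-algebras
and `F, G : A →ₙₐ[R] B` algebra homomorphisms admitting a common section `r : B → A`
(an algebra homomorphism with `F ∘ r = G ∘ r = id_B`).  Then the image of the
`R`-linear map `F - G`, i.e. the set `{F(a) - G(a) : a ∈ A}`, is a two-sided ideal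
of `B`: it is stable under left and right multiplication by arbitrary elements of
`B` (it is automatically an `R`-submodule, being the image of an `R`-linear map). -/
theorem stmt_11 {R A B : Type} [CommRing R]
    [NonUnitalRing A] [Module R A] [SMulCommClass R A A] [IsScalarTower R A A]
    [NonUnitalRing B] [Module R B] [SMulCommClass R B B] [IsScalarTower R B B]
    (F G : A →ₙₐ[R] B) (r : B →ₙₐ[R] A)
    (hF : ∀ b : B, F (r b) = b) (hG : ∀ b : B, G (r b) = b) :
    ∀ b ∈ Set.range fun a : A => F a - G a, ∀ c : B,
      (c * b ∈ Set.range fun a : A => F a - G a) ∧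
      (b * c ∈ Set.range fun a : A => F a - G a) := by
  rintro b ⟨a, rfl⟩ c
  constructor
  · exact ⟨r c * a, by simp [map_mul, hF, hG, mul_sub]⟩
  · exact ⟨a * r c, by simp [map_mul, hF, hG, sub_mul]⟩
end

section
/- In the setting of the previous lemma (F, G : A → B algebra homomorphisms with a common section r : B → A, F∘r = G∘r = id_B), let J ⊆ B be the two-sided ideal Im(F−G). Then the quotient algebra B/J together with the projection q : B → B/J is a coequalizer of the pair (F, G) in the category of R-algebras: q∘F = q∘G, and any algebra homomorphism p : B → C with p∘F = p∘G factors uniquely through q. -/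
/-- Let `F, G : A → B` be homomorphisms of (possibly non-unital)
associative `R`-algebras with a common section `r : B → A` (`F∘r = G∘r = id_B`), and
let `J ⊆ B` be the two-sided ideal `Im(F - G)`.  Then the quotient algebra `B/J`
(presented here as any surjective algebra homomorphism `q : B → Q` whose kernel is
exactly `J`) together with `q` is a coequalizer of the pair `(F, G)` in the category
of `R`-algebras: `q∘F = q∘G`, and every algebra homomorphism `p : B → C` with
`p∘F = p∘G` factors uniquely through `q`. -/
theorem stmt_12 {R A B Q : Type} [CommRing R]
    [NonUnitalRing A] [Module R A] [SMulCommClass R A A] [IsScalarTower R A A]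
    [NonUnitalRing B] [Module R B] [SMulCommClass R B B] [IsScalarTower R B B]
    [NonUnitalRing Q] [Module R Q] [SMulCommClass R Q Q] [IsScalarTower R Q Q]
    (F G : A →ₙₐ[R] B) (r : B →ₙₐ[R] A)
    (hF : ∀ b : B, F (r b) = b) (hG : ∀ b : B, G (r b) = b)
    (q : B →ₙₐ[R] Q) (hq : Function.Surjective q)
    (hker : ∀ b : B, q b = 0 ↔ ∃ a : A, F a - G a = b) :
    (∀ a : A, q (F a) = q (G a)) ∧
    (∀ (C : Type) [NonUnitalRing C] [Module R C] [SMulCommClass R C C]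
        [IsScalarTower R C C] (p : B →ₙₐ[R] C), (∀ a : A, p (F a) = p (G a)) →
      ∃! p' : Q →ₙₐ[R] C, ∀ b : B, p' (q b) = p b) := by
  constructor
  · intro a
    rw [← sub_eq_zero, ← map_sub]
    exact (hker _).2 ⟨a, rfl⟩
  · intro C _ _ _ _ p hp
    set g : Q → C := fun x => p (hq x).choose with hg
    have key : ∀ b : B, g (q b) = p b := by
      intro b
      have h1 : q (hq (q b)).choose = q b := (hq (q b)).choose_spec
      have h2 : q ((hq (q b)).choose - b) = 0 := by rw [map_sub, h1, sub_self]
      obtain ⟨a, ha⟩ := (hker _).1 h2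
      have : p (hq (q b)).choose - p b = 0 := by
        rw [← map_sub, ← ha, map_sub, hp, sub_self]
      have := sub_eq_zero.1 this
      simpa [hg] using this
    have gsmul : ∀ (c : R) (x : Q), g (c • x) = c • g x := by
      intro c x
      obtain ⟨b, rfl⟩ := hq x
      rw [← map_smul, key, key, map_smul]
    have gzero : g 0 = 0 := by
      rw [← map_zero q, key, map_zero]
    have gadd : ∀ x y : Q, g (x + y) = g x + g y := by
      intro x y
      obtain ⟨b, rfl⟩ := hq x
      obtain ⟨b', rfl⟩ := hq y
      rw [← map_add, key, key, key, map_add]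
    have gmul : ∀ x y : Q, g (x * y) = g x * g y := by
      intro x y
      obtain ⟨b, rfl⟩ := hq x
      obtain ⟨b', rfl⟩ := hq y
      rw [← map_mul, key, key, key, map_mul]
    refine ⟨{ toFun := g
              map_smul' := gsmul
              map_zero' := gzero
              map_add' := gadd
              map_mul' := gmul }, key, ?_⟩
    intro p' hp'
    ext x
    obtain ⟨b, rfl⟩ := hq x
    simp [hp' b, key b]
end

section
/- (Duskin's 3×3 lemma for coequalizers.) In an arbitrary category, consider a 3×3 diagram with rows (A_i ⇉ B_i → C_i) for i=1,2,3 and columns (A_1 ⇉ A_2 → A_3), (B_1 ⇉ B_2 → B_3), (C_1 ⇉ C_2 → C_3), all squares commuting appropriately (f_i∘α₃ = β₃∘g_i, f₃∘β₃ = γ₃∘g₃, g_i∘α_i = β_i∘h_i, g₃∘β_i = γ_i∘h₃ for i=1,2). Assume the top two rows are coequalizer diagrams and the two left columns are coequalizer diagrams. Then the bottom row is a coequalizer diagram if and only if the right-hand column is a coequalizer diagram. -/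
open CategoryTheory

/-- `c : Y ⟶ Z` is a coequalizer of the parallel pair `u, v : X ⟶ Y`. -/
def IsCoeq {C : Type*} [Category C] {X Y Z : C} (u v : X ⟶ Y) (c : Y ⟶ Z) : Prop :=
  u ≫ c = v ≫ c ∧
    ∀ ⦃W : C⦄ (p : Y ⟶ W), u ≫ p = v ≫ p → ∃! q : Z ⟶ W, c ≫ q = p

/-- A coequalizer map is epi (cancellation form). -/
lemma coeq_cancel {C : Type*} [Category C] {X Y Z : C} {u v : X ⟶ Y} {c : Y ⟶ Z}
    (h : IsCoeq u v c) {W : C} {a b : Z ⟶ W} (hab : c ≫ a = c ≫ b) : a = b := by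
  obtain ⟨q, hq, hqu⟩ := h.2 (c ≫ a)
    (by rw [← Category.assoc, ← Category.assoc, h.1])
  exact (hqu a rfl).trans (hqu b hab.symm).symm

/-- Joint coequalizer of two parallel pairs with common codomain. -/
def Joint {C : Type*} [Category C] {X Y Z W : C} (u v : X ⟶ Z) (s t : Y ⟶ Z)
    (c : Z ⟶ W) : Prop :=
  u ≫ c = v ≫ c ∧ s ≫ c = t ≫ c ∧
    ∀ ⦃V : C⦄ (p : Z ⟶ V), u ≫ p = v ≫ p → s ≫ p = t ≫ p → ∃! q : W ⟶ V, c ≫ q = p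

lemma joint_symm {C : Type*} [Category C] {X Y Z W : C} {u v : X ⟶ Z} {s t : Y ⟶ Z}
    {c : Z ⟶ W} : Joint u v s t c ↔ Joint s t u v c := by
  constructor <;> rintro ⟨a, b, h⟩ <;> exact ⟨b, a, fun V p h1 h2 => h p h2 h1⟩

/-- Key half of the 3×3 lemma: the bottom row is a coequalizer iff the diagonal
`β₃ ≫ f₃` is a joint coequalizer of the pairs `(β₁, β₂)` and `(g₁, g₂)`. -/
lemma key {C : Type*} [Category C] {A₁ A₂ A₃ B₁ B₂ B₃ C₃ : C}
    (f₁ f₂ : A₃ ⟶ B₃) (f₃ : B₃ ⟶ C₃) (g₁ g₂ : A₂ ⟶ B₂)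
    (α₁ α₂ : A₁ ⟶ A₂) (α₃ : A₂ ⟶ A₃)
    (β₁ β₂ : B₁ ⟶ B₂) (β₃ : B₂ ⟶ B₃)
    (c₁ : α₃ ≫ f₁ = g₁ ≫ β₃) (c₂ : α₃ ≫ f₂ = g₂ ≫ β₃)
    (col₁ : IsCoeq α₁ α₂ α₃) (col₂ : IsCoeq β₁ β₂ β₃) :
    IsCoeq f₁ f₂ f₃ ↔ Joint β₁ β₂ g₁ g₂ (β₃ ≫ f₃) := by
  constructor
  · intro hf
    refine ⟨?_, ?_, ?_⟩
    · rw [← Category.assoc, ← Category.assoc, col₂.1]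
    · rw [← Category.assoc, ← Category.assoc, ← c₁, ← c₂, Category.assoc,
        Category.assoc, hf.1]
    · intro V p hβ hg
      obtain ⟨r, hr, hru⟩ := col₂.2 p hβ
      have hfr : f₁ ≫ r = f₂ ≫ r := by
        refine coeq_cancel col₁ ?_
        rw [← Category.assoc, ← Category.assoc, c₁, c₂, Category.assoc,
          Category.assoc, hr, hg]
      obtain ⟨t, ht, htu⟩ := hf.2 r hfr
      refine ⟨t, by show (β₃ ≫ f₃) ≫ t = p; rw [Category.assoc, ht, hr], fun y hy => ?_⟩
      refine coeq_cancel hf (coeq_cancel col₂ ?_)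
      rw [← Category.assoc, hy, ht, hr]
  · rintro ⟨hβ, hg, hu⟩
    constructor
    · refine coeq_cancel col₁ ?_
      rw [← Category.assoc, ← Category.assoc, c₁, c₂, Category.assoc,
        Category.assoc]
      exact hg
    · intro W p hp
      have hβp : β₁ ≫ (β₃ ≫ p) = β₂ ≫ (β₃ ≫ p) := by
        rw [← Category.assoc, ← Category.assoc, col₂.1]
      have hgp : g₁ ≫ (β₃ ≫ p) = g₂ ≫ (β₃ ≫ p) := by
        rw [← Category.assoc, ← Category.assoc, ← c₁, ← c₂, Category.assoc,
          Category.assoc, hp]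
      obtain ⟨t, ht, htu⟩ := hu (β₃ ≫ p) hβp hgp
      refine ⟨t, coeq_cancel col₂ ?_, fun y hy => htu y (by show (β₃ ≫ f₃) ≫ y = β₃ ≫ p; rw [Category.assoc, hy])⟩
      rw [← Category.assoc]
      exact ht

/-- **Duskin's 3×3 lemma for coequalizers.** Given, in an arbitrary
category, a 3×3 diagram with rows `(A_i ⇉ B_i → C_i)` and columns
`(A_1 ⇉ A_2 → A_3)`, `(B_1 ⇉ B_2 → B_3)`, `(C_1 ⇉ C_2 → C_3)`, commuting in the sense
`f_i∘α₃ = β₃∘g_i`, `f₃∘β₃ = γ₃∘g₃`, `g_i∘α_i = β_i∘h_i`, `g₃∘β_i = γ_i∘h₃`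
(`i = 1, 2`), such that the top two rows and the two left columns are coequalizer
diagrams, the bottom row is a coequalizer diagram if and only if the right-hand
column is. -/
theorem stmt_13 {C : Type*} [Category C]
    {A₁ A₂ A₃ B₁ B₂ B₃ C₁ C₂ C₃ : C}
    (h₁ h₂ : A₁ ⟶ B₁) (h₃ : B₁ ⟶ C₁)
    (g₁ g₂ : A₂ ⟶ B₂) (g₃ : B₂ ⟶ C₂)
    (f₁ f₂ : A₃ ⟶ B₃) (f₃ : B₃ ⟶ C₃)
    (α₁ α₂ : A₁ ⟶ A₂) (α₃ : A₂ ⟶ A₃)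
    (β₁ β₂ : B₁ ⟶ B₂) (β₃ : B₂ ⟶ B₃)
    (γ₁ γ₂ : C₁ ⟶ C₂) (γ₃ : C₂ ⟶ C₃)
    -- commutation conditions
    (c₁ : α₃ ≫ f₁ = g₁ ≫ β₃) (c₂ : α₃ ≫ f₂ = g₂ ≫ β₃)
    (c₃ : β₃ ≫ f₃ = g₃ ≫ γ₃)
    (c₄ : α₁ ≫ g₁ = h₁ ≫ β₁) (c₅ : α₂ ≫ g₂ = h₂ ≫ β₂)
    (c₆ : β₁ ≫ g₃ = h₃ ≫ γ₁) (c₇ : β₂ ≫ g₃ = h₃ ≫ γ₂)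
    -- the top two rows are coequalizers
    (row₁ : IsCoeq h₁ h₂ h₃) (row₂ : IsCoeq g₁ g₂ g₃)
    -- the two left columns are coequalizers
    (col₁ : IsCoeq α₁ α₂ α₃) (col₂ : IsCoeq β₁ β₂ β₃) :
    IsCoeq f₁ f₂ f₃ ↔ IsCoeq γ₁ γ₂ γ₃ := by
  rw [key f₁ f₂ f₃ g₁ g₂ α₁ α₂ α₃ β₁ β₂ β₃ c₁ c₂ col₁ col₂,
    key γ₁ γ₂ γ₃ β₁ β₂ h₁ h₂ h₃ g₁ g₂ g₃ c₆.symm c₇.symm row₁ row₂, c₃]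
  exact joint_symm
end

section
/- Let 0 → M′ → M → M″ → 0 be a short exact sequence of cochain complexes of R-modules which is degreewise split (in each degree n the sequence 0 → M′ⁿ → Mⁿ → M″ⁿ → 0 is a split exact sequence of R-modules). If M′ and M″ are h-projective, then M is h-projective. -/
namespace Complexes

variable {R : Type} [CommRing R]

/-- Transport along an equality of degrees, as an `R`-linear map. -/
def gcast {N : ℤ → Type} [∀ n, AddCommGroup (N n)] [∀ n, Module R (N n)]
    {a b : ℤ} (h : a = b) : N a →ₗ[R] N b where
  toFun x := h ▸ x
  map_add' := by subst h; intros; rfl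
  map_smul' := by subst h; intros; rfl

/-- A (unbounded cochain) complex `(X, dX)` of `R`-modules is acyclic if all its
cohomology vanishes, i.e. every closed element is a boundary. -/
def IsAcyclic (X : ℤ → Type) [∀ n, AddCommGroup (X n)] [∀ n, Module R (X n)]
    (dX : ∀ n, X n →ₗ[R] X (n + 1)) : Prop :=
  ∀ (n : ℤ) (x : X n), dX n x = 0 →
    ∃ y : X (n - 1), gcast (R := R) (N := X) (show n - 1 + 1 = n by ring) (dX (n - 1) y) = x

/-- The differential of the total Hom-complex `Hom(M, N)`, whose degree-`n` part is
`∏ₖ Hom_R(Mᵏ, N^{k+n})`, given by `d(f) = d_N ∘ f - (-1)ⁿ f ∘ d_M`. -/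
def homD {M N : ℤ → Type} [∀ n, AddCommGroup (M n)] [∀ n, Module R (M n)]
    [∀ n, AddCommGroup (N n)] [∀ n, Module R (N n)]
    (dM : ∀ n, M n →ₗ[R] M (n + 1)) (dN : ∀ n, N n →ₗ[R] N (n + 1))
    (n : ℤ) (f : ∀ k : ℤ, M k →ₗ[R] N (k + n)) :
    ∀ k : ℤ, M k →ₗ[R] N (k + (n + 1)) := fun k =>
  (gcast (R := R) (N := N) (show k + n + 1 = k + (n + 1) by ring)).comp
      ((dN (k + n)).comp (f k)) -
    (((-1 : ℤˣ) ^ n : ℤˣ) : ℤ) •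
      (gcast (R := R) (N := N) (show k + 1 + n = k + (n + 1) by ring)).comp
        ((f (k + 1)).comp (dM k))

/-- A complex `(M, dM)` of `R`-modules is h-projective if for every acyclic complex
`(N, dN)` the total Hom-complex `Hom(M, N)` is acyclic: every cocycle of the
Hom-complex is a coboundary. -/
def IsHProj (M : ℤ → Type) [∀ n, AddCommGroup (M n)] [∀ n, Module R (M n)]
    (dM : ∀ n, M n →ₗ[R] M (n + 1)) : Prop :=
  ∀ (N : ℤ → Type) [∀ n, AddCommGroup (N n)] [∀ n, Module R (N n)]
    (dN : ∀ n, N n →ₗ[R] N (n + 1)),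
    (∀ (n : ℤ) (x : N n), dN (n + 1) (dN n x) = 0) →
    IsAcyclic N dN →
    ∀ (n : ℤ) (f : ∀ k : ℤ, M k →ₗ[R] N (k + n)),
      (∀ k : ℤ, homD dM dN n f k = 0) →
      ∃ g : ∀ k : ℤ, M k →ₗ[R] N (k + (n - 1)),
        ∀ (k : ℤ) (x : M k),
          gcast (R := R) (N := N) (show k + (n - 1 + 1) = k + n by ring)
            (homD dM dN (n - 1) g k x) = f k x

end Complexes

namespace Complexes

variable {R : Type} [CommRing R]

theorem gcast_gcast {N : ℤ → Type} [∀ n, AddCommGroup (N n)] [∀ n, Module R (N n)]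
    {a b c : ℤ} (h1 : a = b) (h2 : b = c) (x : N a) :
    gcast (R := R) (N := N) h2 (gcast (R := R) (N := N) h1 x)
      = gcast (R := R) (N := N) (h1.trans h2) x := by
  subst h1; rfl

theorem dN_gcast {N : ℤ → Type} [∀ n, AddCommGroup (N n)] [∀ n, Module R (N n)]
    (dN : ∀ n, N n →ₗ[R] N (n + 1)) {a b : ℤ} (h : a = b) (x : N a) :
    dN b (gcast (R := R) (N := N) h x)
      = gcast (R := R) (N := N) (congrArg (· + 1) h) (dN a x) := by
  subst h; rfl

/-- Naturality of `homD` along a chain map `φ : A → B`. -/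
theorem homD_comp {A B N : ℤ → Type}
    [∀ n, AddCommGroup (A n)] [∀ n, Module R (A n)]
    [∀ n, AddCommGroup (B n)] [∀ n, Module R (B n)]
    [∀ n, AddCommGroup (N n)] [∀ n, Module R (N n)]
    (dA : ∀ n, A n →ₗ[R] A (n + 1)) (dB : ∀ n, B n →ₗ[R] B (n + 1))
    (dN : ∀ n, N n →ₗ[R] N (n + 1))
    (φ : ∀ k, A k →ₗ[R] B k) (hφ : ∀ k x, dB k (φ k x) = φ (k + 1) (dA k x))
    (m : ℤ) (q : ∀ k, B k →ₗ[R] N (k + m)) (k : ℤ) (x : A k) :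
    homD dA dN m (fun j => (q j).comp (φ j)) k x = homD dB dN m q k (φ k x) := by
  simp only [homD, LinearMap.sub_apply, LinearMap.smul_apply, LinearMap.comp_apply, hφ]

theorem homD_sub_apply {M N : ℤ → Type}
    [∀ n, AddCommGroup (M n)] [∀ n, Module R (M n)]
    [∀ n, AddCommGroup (N n)] [∀ n, Module R (N n)]
    (dM : ∀ n, M n →ₗ[R] M (n + 1)) (dN : ∀ n, N n →ₗ[R] N (n + 1))
    (m : ℤ) (u v : ∀ k, M k →ₗ[R] N (k + m)) (k : ℤ) (x : M k) :
    homD dM dN m (fun j => u j - v j) k x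
      = homD dM dN m u k x - homD dM dN m v k x := by
  simp only [homD, LinearMap.sub_apply, LinearMap.smul_apply, LinearMap.comp_apply,
    map_sub, smul_sub]
  abel

theorem homD_add_apply {M N : ℤ → Type}
    [∀ n, AddCommGroup (M n)] [∀ n, Module R (M n)]
    [∀ n, AddCommGroup (N n)] [∀ n, Module R (N n)]
    (dM : ∀ n, M n →ₗ[R] M (n + 1)) (dN : ∀ n, N n →ₗ[R] N (n + 1))
    (m : ℤ) (u v : ∀ k, M k →ₗ[R] N (k + m)) (k : ℤ) (x : M k) :
    homD dM dN m (fun j => u j + v j) k x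
      = homD dM dN m u k x + homD dM dN m v k x := by
  simp only [homD, LinearMap.sub_apply, LinearMap.smul_apply, LinearMap.comp_apply, LinearMap.add_apply,
    map_add, smul_add]
  abel

theorem sign_succ (n : ℤ) :
    (((-1 : ℤˣ) ^ n : ℤˣ) : ℤ) = -(((-1 : ℤˣ) ^ (n - 1) : ℤˣ) : ℤ) := by
  rw [show n = n - 1 + 1 by ring, zpow_add_one]
  simp

/-- `d² = 0` on the Hom complex. -/
theorem homD_homD {M N : ℤ → Type}
    [∀ n, AddCommGroup (M n)] [∀ n, Module R (M n)]
    [∀ n, AddCommGroup (N n)] [∀ n, Module R (N n)]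
    (dM : ∀ n, M n →ₗ[R] M (n + 1)) (dN : ∀ n, N n →ₗ[R] N (n + 1))
    (hdM : ∀ n x, dM (n + 1) (dM n x) = 0) (hdN : ∀ n x, dN (n + 1) (dN n x) = 0)
    (n : ℤ) (g : ∀ k, M k →ₗ[R] N (k + (n - 1))) (k : ℤ) (x : M k) :
    homD dM dN n
      (fun j => (gcast (R := R) (N := N) (show j + (n - 1 + 1) = j + n by ring)).comp
        (homD dM dN (n - 1) g j)) k x = 0 := by
  simp only [homD, LinearMap.sub_apply, LinearMap.smul_apply, LinearMap.comp_apply,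
    map_sub, map_zsmul, dN_gcast, gcast_gcast, hdM, hdN, map_zero, smul_zero,
    zero_sub, sub_zero]
  rw [sign_succ n]
  simp only [map_neg, map_zsmul, gcast_gcast, neg_smul, sub_neg_eq_add, neg_add_cancel]

end Complexes


open Complexes in
/-- Let `0 → M′ → M → M″ → 0` be a short exact sequence of cochain
complexes of `R`-modules which is degreewise split (in each degree it is a split
short exact sequence of `R`-modules).  If `M′` and `M″` are h-projective, then so
is `M`. -/
theorem stmt_15 {R : Type} [CommRing R]
    (M' M M'' : ℤ → Type)
    [∀ n, AddCommGroup (M' n)] [∀ n, Module R (M' n)]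
    [∀ n, AddCommGroup (M n)] [∀ n, Module R (M n)]
    [∀ n, AddCommGroup (M'' n)] [∀ n, Module R (M'' n)]
    (d' : ∀ n, M' n →ₗ[R] M' (n + 1)) (dM : ∀ n, M n →ₗ[R] M (n + 1))
    (d'' : ∀ n, M'' n →ₗ[R] M'' (n + 1))
    (hd' : ∀ n x, d' (n + 1) (d' n x) = 0)
    (hdM : ∀ n x, dM (n + 1) (dM n x) = 0)
    (hd'' : ∀ n x, d'' (n + 1) (d'' n x) = 0)
    (ι : ∀ n, M' n →ₗ[R] M n) (π : ∀ n, M n →ₗ[R] M'' n)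
    -- `ι` and `π` are chain maps
    (hι : ∀ n x, dM n (ι n x) = ι (n + 1) (d' n x))
    (hπ : ∀ n x, d'' n (π n x) = π (n + 1) (dM n x))
    -- degreewise short exact
    (hinj : ∀ n, Function.Injective (ι n))
    (hsurj : ∀ n, Function.Surjective (π n))
    (hexact : ∀ (n : ℤ) (x : M n), π n x = 0 ↔ ∃ y : M' n, ι n y = x)
    -- degreewise split
    (hsplit : ∀ n : ℤ, ∃ s : M'' n →ₗ[R] M n, ∀ x, π n (s x) = x)
    (h' : IsHProj M' d') (h'' : IsHProj M'' d'') :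
    IsHProj M dM := by
  intro N _ _ dN hdN hacy n f hf
  choose s hs using hsplit
  have hπι : ∀ (k : ℤ) (y : M' k), π k (ι k y) = 0 := fun k y =>
    (hexact k (ι k y)).mpr ⟨y, rfl⟩
  have hker : ∀ (k : ℤ) (x : M k), π k (x - s k (π k x)) = 0 := by
    intro k x; simp [map_sub, hs]
  choose r0 hr0 using fun (k : ℤ) (x : M k) => (hexact k (x - s k (π k x))).mp (hker k x)
  let r : ∀ k, M k →ₗ[R] M' k := fun k =>
    { toFun := r0 k
      map_add' := by
        intro x y
        apply hinj k
        rw [map_add (ι k), hr0, hr0, hr0]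
        simp only [map_add]
        abel
      map_smul' := by
        intro c x
        apply hinj k
        rw [RingHom.id_apply, map_smul (ι k), hr0, hr0]
        simp only [map_smul, smul_sub] }
  have hr : ∀ (k : ℤ) (x : M k), ι k (r k x) = x - s k (π k x) := hr0
  have hrι : ∀ (k : ℤ) (y : M' k), r k (ι k y) = y := by
    intro k y
    apply hinj k
    rw [hr, hπι, map_zero, sub_zero]
  -- `f ∘ ι` is a cocycle in `Hom(M', N)`
  have hfι : ∀ k, homD d' dN n (fun j => (f j).comp (ι j)) k = 0 := by
    intro k
    ext x
    rw [LinearMap.zero_apply, homD_comp d' dM dN ι hι n f k x, hf k, LinearMap.zero_apply]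
  obtain ⟨g', hg'⟩ := h' N dN hdN hacy n (fun j => (f j).comp (ι j)) hfι
  -- extend `g'` to `M` via the retraction `r`
  set gt : ∀ k, M k →ₗ[R] N (k + (n - 1)) := fun k => (g' k).comp (r k) with hgtdef
  have hgtι : (fun j => (gt j).comp (ι j)) = g' := by
    funext j; ext y
    simp only [LinearMap.comp_apply, hgtdef]
    rw [hrι]
  have L1 : ∀ (k : ℤ) (x : M' k),
      homD dM dN (n - 1) gt k (ι k x) = homD d' dN (n - 1) g' k x := by
    intro k x
    rw [← homD_comp d' dM dN ι hι (n - 1) gt k x, hgtι]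
  set h : ∀ k, M k →ₗ[R] N (k + n) := fun k =>
    f k - (gcast (R := R) (N := N) (show k + (n - 1 + 1) = k + n by ring)).comp
      (homD dM dN (n - 1) gt k) with hhdef
  have hhapp : ∀ (k : ℤ) (x : M k), h k x
      = f k x - gcast (R := R) (N := N) (show k + (n - 1 + 1) = k + n by ring)
          (homD dM dN (n - 1) gt k x) := fun k x => rfl
  have hA : ∀ (k : ℤ) (y : M' k), h k (ι k y) = 0 := by
    intro k y
    rw [hhapp, L1 k y, hg' k y]
    simp
  have hAs : ∀ (k : ℤ) (x : M k), h k x = h k (s k (π k x)) := by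
    intro k x
    have h1 : h k x - h k (s k (π k x)) = 0 := by
      rw [← map_sub, ← hr k x]
      exact hA k (r k x)
    exact sub_eq_zero.mp h1
  have hB : ∀ (k : ℤ) (x : M k), homD dM dN n h k x = 0 := by
    intro k x
    rw [hhdef, homD_sub_apply dM dN n f _ k x, hf k, LinearMap.zero_apply, zero_sub,
      neg_eq_zero]
    exact homD_homD dM dN hdM hdN n gt k x
  set h2 : ∀ k, M'' k →ₗ[R] N (k + n) := fun k => (h k).comp (s k) with hh2def
  have hh2π : (fun j => (h2 j).comp (π j)) = h := by
    funext j; ext x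
    simp only [LinearMap.comp_apply, hh2def]
    exact (hAs j x).symm
  have hC : ∀ k, homD d'' dN n h2 k = 0 := by
    intro k
    ext z
    obtain ⟨x, rfl⟩ := hsurj k z
    rw [LinearMap.zero_apply, ← homD_comp dM d'' dN π hπ n h2 k x, hh2π]
    exact hB k x
  obtain ⟨g'', hg''⟩ := h'' N dN hdN hacy n h2 hC
  refine ⟨fun k => gt k + (g'' k).comp (π k), ?_⟩
  intro k x
  rw [homD_add_apply dM dN (n - 1) gt _ k x, map_add,
    homD_comp dM d'' dN π hπ (n - 1) g'' k x, hg'' k (π k x)]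
  show gcast (R := R) (N := N) (show k + (n - 1 + 1) = k + n by ring)
      (homD dM dN (n - 1) gt k x) + h k (s k (π k x)) = f k x
  rw [← hAs k x, hhapp k x]
  abel
end
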